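/- Let f be a strictly increasing continuous bijection of [z1,z4] onto its image, differentiable except at one interior point b ∈ (z1, z2) of [z1,z4], with one-sided derivatives Df₋(b), Df₊(b) > 0, f ∈ C² on [z1,b] and on [b,z4], and Df ≥ c > 0. Set σ = Df₋(b)/Df₊(b), α = z2 − z1, β = z3 − z2, τ = z2 − b, ξ = β/α, z = τ/α. Then |Dist(z1,z2,z3,z4;f) − (σ + (1−σ)z)(1+ξ)/(σ + (1−σ)z + ξ)| ≤ C2·(z4 − z1), where C2 depends only on bounds for f on [z1,z4]. -/

import Mathlib

/-!
Near the break point, `f` is to first order the piecewise linear map `brokenLinear bp Dm Dp`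
with slopes `Dm` and `Dp`, and the main term of the estimate is exactly the distortion of that
map. `Distortion` is a ratio of products of four difference quotients; on subintervals of
`[z1, z4]` the difference quotients of `f` and of the broken linear map lie between two positive
constants and, because `f'` is Lipschitz on each side of the break, differ by `O(z4 - z1)`.
-/

open Set

noncomputable def Cr (z1 z2 z3 z4 : ℝ) : ℝ :=
  ((z2 - z1) * (z4 - z3)) / ((z3 - z1) * (z4 - z2))

noncomputable def Distortion (z1 z2 z3 z4 : ℝ) (F : ℝ → ℝ) : ℝ :=
  Cr (F z1) (F z2) (F z3) (F z4) / Cr z1 z2 z3 z4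

theorem distortion_eq_slope (z1 z2 z3 z4 : ℝ) (F : ℝ → ℝ) :
    Distortion z1 z2 z3 z4 F =
      slope F z1 z2 * slope F z3 z4 / (slope F z1 z3 * slope F z2 z4) := by
  simp only [Distortion, Cr, slope_def_field, div_eq_mul_inv, mul_inv, inv_inv]
  ring

def brokenLinear (b σm σp x : ℝ) : ℝ := σm * (min x b - b) + σp * (max x b - b)

theorem brokenLinear_of_le {b σm σp x : ℝ} (hx : x ≤ b) :
    brokenLinear b σm σp x = σm * (x - b) := by
  simp [brokenLinear, min_eq_left hx, max_eq_right hx]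

theorem brokenLinear_of_ge {b σm σp x : ℝ} (hx : b ≤ x) :
    brokenLinear b σm σp x = σp * (x - b) := by
  simp [brokenLinear, min_eq_right hx, max_eq_left hx]

theorem slope_brokenLinear_mem_Icc {b σm σp x y : ℝ} (hxy : x < y) :
    slope (brokenLinear b σm σp) x y ∈ Icc (min σm σp) (max σm σp) := by
  have hl : 0 ≤ min y b - min x b := sub_nonneg.2 (min_le_min_right b hxy.le)
  have hr : 0 ≤ max y b - max x b := sub_nonneg.2 (max_le_max_right b hxy.le)
  have hsum : (min y b - min x b) + (max y b - max x b) = y - x := by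
    linarith [min_add_max x b, min_add_max y b]
  have hinc : brokenLinear b σm σp y - brokenLinear b σm σp x
      = σm * (min y b - min x b) + σp * (max y b - max x b) := by
    simp only [brokenLinear]; ring
  rw [slope_def_field, hinc, mem_Icc, le_div_iff₀ (sub_pos.2 hxy), div_le_iff₀ (sub_pos.2 hxy)]
  rw [← hsum]
  constructor
  · linarith [mul_le_mul_of_nonneg_right (min_le_left σm σp) hl,
      mul_le_mul_of_nonneg_right (min_le_right σm σp) hr]
  · linarith [mul_le_mul_of_nonneg_right (le_max_left σm σp) hl,
      mul_le_mul_of_nonneg_right (le_max_right σm σp) hr]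

theorem slope_brokenLinear_of_le_of_le {b σm σp x y : ℝ} (hx : x ≤ b) (hy : b ≤ y) :
    slope (brokenLinear b σm σp) x y = (σm * (b - x) + σp * (y - b)) / (y - x) := by
  rw [slope_def_field, brokenLinear_of_le hx, brokenLinear_of_ge hy]
  ring

theorem slope_brokenLinear_of_ge {b σm σp x y : ℝ} (hx : b ≤ x) (hxy : x < y) :
    slope (brokenLinear b σm σp) x y = σp := by
  rw [slope_def_field, brokenLinear_of_ge hx, brokenLinear_of_ge (hx.trans hxy.le)]
  field_simp [(sub_pos.2 hxy).ne']
  ring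

theorem distortion_brokenLinear {b σm σp z1 z2 z3 z4 : ℝ} (hσm : 0 ≤ σm) (hσp : 0 < σp)
    (hb : b ∈ Icc z1 z2) (h12 : z1 < z2) (h23 : z2 < z3) (h34 : z3 < z4) :
    Distortion z1 z2 z3 z4 (brokenLinear b σm σp) =
      ((σm / σp + (1 - σm / σp) * ((z2 - b) / (z2 - z1))) * (1 + (z3 - z2) / (z2 - z1))) /
        (σm / σp + (1 - σm / σp) * ((z2 - b) / (z2 - z1)) + (z3 - z2) / (z2 - z1)) := by
  have h3 : b ≤ z3 := hb.2.trans h23.le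
  rw [distortion_eq_slope, slope_brokenLinear_of_le_of_le hb.1 hb.2,
    slope_brokenLinear_of_le_of_le hb.1 h3, slope_brokenLinear_of_ge h3 h34,
    slope_brokenLinear_of_ge hb.2 (h23.trans h34)]
  have h21 : z2 - z1 ≠ 0 := (sub_pos.2 h12).ne'
  have h31 : z3 - z1 ≠ 0 := (sub_pos.2 (h12.trans h23)).ne'
  have hσp' : σp ≠ 0 := hσp.ne'
  have hN : σm * (b - z1) + σp * (z3 - b) ≠ 0 := by
    have := mul_nonneg hσm (sub_nonneg.2 hb.1)
    have := mul_pos hσp (sub_pos.2 (hb.2.trans_lt h23))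
    linarith
  have hσ : σm / σp + (1 - σm / σp) * ((z2 - b) / (z2 - z1)) =
      (σm * (b - z1) + σp * (z2 - b)) / (σp * (z2 - z1)) := by
    field_simp; ring
  have hξ : (σm * (b - z1) + σp * (z2 - b)) / (σp * (z2 - z1)) + (z3 - z2) / (z2 - z1) =
      (σm * (b - z1) + σp * (z3 - b)) / (σp * (z2 - z1)) := by
    field_simp; ring
  rw [hσ, hξ, one_add_div h21]
  field_simp
  ring

theorem abs_mul_sub_mul_le {a b a' b' M ε : ℝ} (ha : |a| ≤ M) (hb : |b| ≤ M) (ha' : |a'| ≤ M)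
    (hb' : |b'| ≤ M) (h₁ : |a - a'| ≤ ε) (h₂ : |b - b'| ≤ ε) :
    |a * b - a' * b'| ≤ 2 * M * ε := by
  have hsum₁ : |a + a'| ≤ 2 * M := (abs_add_le a a').trans (by linarith)
  have hsum₂ : |b + b'| ≤ 2 * M := (abs_add_le b b').trans (by linarith)
  have hM : 0 ≤ M := (abs_nonneg a).trans ha
  have hε : 0 ≤ ε := (abs_nonneg _).trans h₁
  calc |a * b - a' * b'| = |(a - a') * (b + b') + (a + a') * (b - b')| / 2 := by
        rw [eq_div_iff two_ne_zero, ← abs_two, ← abs_mul]; congr 1; ring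
    _ ≤ (|a - a'| * |b + b'| + |a + a'| * |b - b'|) / 2 := by
        gcongr; exact (abs_add_le _ _).trans_eq (by rw [abs_mul, abs_mul])
    _ ≤ (ε * (2 * M) + 2 * M * ε) / 2 := by gcongr
    _ = 2 * M * ε := by ring

theorem abs_div_sub_div_le {p q p' q' m M ε : ℝ} (hm : 0 < m) (hq : m ≤ q) (hq' : m ≤ q')
    (hp : |p| ≤ M) (hqM : |q| ≤ M) (hp' : |p'| ≤ M) (hq'M : |q'| ≤ M)
    (h₁ : |p - p'| ≤ ε) (h₂ : |q - q'| ≤ ε) :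
    |p / q - p' / q'| ≤ 2 * M * ε / m ^ 2 := by
  have hq0 : 0 < q := hm.trans_le hq
  have hq'0 : 0 < q' := hm.trans_le hq'
  have hnum : |p * q' - p' * q| ≤ 2 * M * ε :=
    abs_mul_sub_mul_le hp hq'M hp' hqM h₁ (by rwa [abs_sub_comm])
  calc |p / q - p' / q'| = |p * q' - p' * q| / (q * q') := by
        rw [div_sub_div _ _ hq0.ne' hq'0.ne', abs_div, abs_of_pos (mul_pos hq0 hq'0),
          mul_comm q p']
    _ ≤ 2 * M * ε / (m * m) := by
        gcongr
        exact (abs_nonneg _).trans hnum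
    _ = 2 * M * ε / m ^ 2 := by ring

theorem abs_mul_div_mul_sub_mul_div_mul_le {m M ε r₁ r₂ r₃ r₄ s₁ s₂ s₃ s₄ : ℝ} (hm : 0 < m)
    (hr₁ : r₁ ∈ Icc m M) (hr₂ : r₂ ∈ Icc m M) (hr₃ : r₃ ∈ Icc m M) (hr₄ : r₄ ∈ Icc m M)
    (hs₁ : s₁ ∈ Icc m M) (hs₂ : s₂ ∈ Icc m M) (hs₃ : s₃ ∈ Icc m M) (hs₄ : s₄ ∈ Icc m M)
    (h₁ : |r₁ - s₁| ≤ ε) (h₂ : |r₂ - s₂| ≤ ε) (h₃ : |r₃ - s₃| ≤ ε) (h₄ : |r₄ - s₄| ≤ ε) :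
    |r₁ * r₂ / (r₃ * r₄) - s₁ * s₂ / (s₃ * s₄)| ≤ 4 * M ^ 3 / m ^ 4 * ε := by
  have habs {t : ℝ} (ht : t ∈ Icc m M) : |t| ≤ M := abs_le.2 ⟨by linarith [ht.1, ht.2], ht.2⟩
  have habs₂ {t u : ℝ} (ht : t ∈ Icc m M) (hu : u ∈ Icc m M) : |t * u| ≤ M ^ 2 := by
    rw [abs_mul, sq]
    exact mul_le_mul (habs ht) (habs hu) (abs_nonneg _) (hm.le.trans (ht.1.trans ht.2))
  have hsq {t u : ℝ} (ht : t ∈ Icc m M) (hu : u ∈ Icc m M) : m ^ 2 ≤ t * u := by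
    rw [sq]; exact mul_le_mul ht.1 hu.1 hm.le (hm.le.trans ht.1)
  calc _ ≤ 2 * M ^ 2 * (2 * M * ε) / (m ^ 2) ^ 2 :=
        abs_div_sub_div_le (by positivity) (hsq hr₃ hr₄) (hsq hs₃ hs₄) (habs₂ hr₁ hr₂)
          (habs₂ hr₃ hr₄) (habs₂ hs₁ hs₂) (habs₂ hs₃ hs₄)
          (abs_mul_sub_mul_le (habs hr₁) (habs hr₂) (habs hs₁) (habs hs₂) h₁ h₂)
          (abs_mul_sub_mul_le (habs hr₃) (habs hr₄) (habs hs₃) (habs hs₄) h₃ h₄)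
    _ = 4 * M ^ 3 / m ^ 4 * ε := by ring

theorem mul_sub_le_sub_of_Icc_union_Icc {F : ℝ → ℝ} {C a p b : ℝ}
    (hl : ∀ x ∈ Icc a p, ∀ y ∈ Icc a p, x ≤ y → C * (y - x) ≤ F y - F x)
    (hr : ∀ x ∈ Icc p b, ∀ y ∈ Icc p b, x ≤ y → C * (y - x) ≤ F y - F x) :
    ∀ x ∈ Icc a b, ∀ y ∈ Icc a b, x ≤ y → C * (y - x) ≤ F y - F x := by
  intro x hx y hy hxy
  rcases le_total y p with hyp | hpy
  · exact hl x ⟨hx.1, hxy.trans hyp⟩ y ⟨hx.1.trans hxy, hyp⟩ hxy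
  rcases le_total p x with hpx | hxp
  · exact hr x ⟨hpx, hxy.trans hy.2⟩ y ⟨hpy, hy.2⟩ hxy
  have h₁ := hl x ⟨hx.1, hxp⟩ p ⟨hx.1.trans hxp, le_rfl⟩ hxp
  have h₂ := hr p ⟨le_rfl, hpy.trans hy.2⟩ y ⟨hpy, hy.2⟩ hpy
  linarith

theorem abs_sub_le_mul_of_Icc_union_Icc {F : ℝ → ℝ} {K a p b : ℝ}
    (hl : ∀ x ∈ Icc a p, ∀ y ∈ Icc a p, x ≤ y → |F y - F x| ≤ K * (y - x))
    (hr : ∀ x ∈ Icc p b, ∀ y ∈ Icc p b, x ≤ y → |F y - F x| ≤ K * (y - x)) :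
    ∀ x ∈ Icc a b, ∀ y ∈ Icc a b, x ≤ y → |F y - F x| ≤ K * (y - x) := by
  intro x hx y hy hxy
  rcases le_total y p with hyp | hpy
  · exact hl x ⟨hx.1, hxy.trans hyp⟩ y ⟨hx.1.trans hxy, hyp⟩ hxy
  rcases le_total p x with hpx | hxp
  · exact hr x ⟨hpx, hxy.trans hy.2⟩ y ⟨hpy, hy.2⟩ hxy
  calc |F y - F x| ≤ |F y - F p| + |F p - F x| := abs_sub_le _ _ _
    _ ≤ K * (y - p) + K * (p - x) :=
        add_le_add (hr p ⟨le_rfl, hpy.trans hy.2⟩ y ⟨hpy, hy.2⟩ hpy)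
          (hl x ⟨hx.1, hxp⟩ p ⟨hx.1.trans hxp, le_rfl⟩ hxp)
    _ = K * (y - x) := by ring

theorem le_slope_of_le_deriv_of_ne {f : ℝ → ℝ} {a b p c : ℝ} (hc : 0 < c)
    (hp : p ∈ Icc a b) (hf : ContinuousOn f (Icc a b))
    (hderiv : ∀ x ∈ Icc a b, x ≠ p → c ≤ deriv f x) :
    ∀ x ∈ Icc a b, ∀ y ∈ Icc a b, x < y → c ≤ slope f x y := by
  have piece {u v : ℝ} (hsub : Icc u v ⊆ Icc a b) (hne : ∀ x ∈ Ioo u v, x ≠ p) :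
      ∀ x ∈ Icc u v, ∀ y ∈ Icc u v, x ≤ y → c * (y - x) ≤ f y - f x := by
    have hder : ∀ x ∈ interior (Icc u v), c ≤ deriv f x := by
      rw [interior_Icc]
      exact fun x hx => hderiv x (hsub (Ioo_subset_Icc_self hx)) (hne x hx)
    -- `deriv f x = 0` where `f` is not differentiable, so `c ≤ deriv f x` forces differentiability
    refine (convex_Icc u v).mul_sub_le_image_sub_of_le_deriv (hf.mono hsub)
      (fun x hx => (differentiableAt_of_deriv_ne_zero ?_).differentiableWithinAt) hder
    exact (hc.trans_le (hder x hx)).ne'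
  intro x hx y hy hxy
  rw [slope_def_field, le_div_iff₀ (sub_pos.2 hxy)]
  exact mul_sub_le_sub_of_Icc_union_Icc
    (piece (Icc_subset_Icc_right hp.2) fun x hx => hx.2.ne)
    (piece (Icc_subset_Icc_left hp.1) fun x hx => hx.1.ne') x hx y hy hxy.le

theorem ContDiffOn.exists_abs_sub_sub_derivWithin_mul_le {f : ℝ → ℝ} {a b : ℝ} (hab : a < b)
    (hf : ContDiffOn ℝ 2 f (Icc a b)) :
    ∃ L ≥ 0, ∀ u v, Icc u v ⊆ Icc a b → ∀ p ∈ Icc u v, ∀ x ∈ Icc u v, ∀ y ∈ Icc u v, x ≤ y →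
      |f y - f x - derivWithin f (Icc a b) p * (y - x)| ≤ L * (v - u) * (y - x) := by
  set f' := derivWithin f (Icc a b)
  have hf' : ContDiffOn ℝ 1 f' (Icc a b) := hf.derivWithin (uniqueDiffOn_Icc hab) le_rfl
  obtain ⟨K, hK⟩ := hf'.exists_lipschitzOnWith one_ne_zero (convex_Icc a b) isCompact_Icc
  refine ⟨K, K.2, fun u v huv p hp x hx y hy hxy => ?_⟩
  have hsub : Icc x y ⊆ Icc u v := Icc_subset_Icc hx.1 hy.2
  have hdiff : ∀ t ∈ Icc x y,
      HasDerivWithinAt (fun t => f t - f' p * t) (f' t - f' p) (Icc x y) t := fun t ht => by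
    simpa using (((hf.differentiableOn (by norm_num)) t (huv (hsub ht))).hasDerivWithinAt.mono
      (hsub.trans huv)).fun_sub ((hasDerivWithinAt_id t _).const_mul (f' p))
  have hbound : ∀ t ∈ Icc x y, ‖f' t - f' p‖ ≤ K * (v - u) := fun t ht => by
    have hlip := hK.dist_le_mul t (huv (hsub ht)) p (huv hp)
    rw [Real.dist_eq, Real.dist_eq] at hlip
    exact hlip.trans (by gcongr; exact abs_le.2 ⟨by linarith [(hsub ht).1, hp.2],
      by linarith [(hsub ht).2, hp.1]⟩)
  have := (convex_Icc x y).norm_image_sub_le_of_norm_hasDerivWithin_le hdiff hbound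
    (left_mem_Icc.2 hxy) (right_mem_Icc.2 hxy)
  rw [Real.norm_eq_abs, Real.norm_eq_abs, abs_of_nonneg (sub_nonneg.2 hxy)] at this
  calc |f y - f x - f' p * (y - x)| = |f y - f' p * y - (f x - f' p * x)| := by ring_nf
    _ ≤ K * (v - u) * (y - x) := this

theorem exists_abs_slope_sub_slope_brokenLinear_le {f : ℝ → ℝ} {A B b Dm Dp : ℝ}
    (hb : b ∈ Ioo A B) (hl : ContDiffOn ℝ 2 f (Icc A b)) (hr : ContDiffOn ℝ 2 f (Icc b B))
    (hDm : HasDerivWithinAt f Dm (Iic b) b) (hDp : HasDerivWithinAt f Dp (Ici b) b) :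
    ∃ L ≥ 0, ∀ u v, A ≤ u → u ≤ b → b ≤ v → v ≤ B → ∀ x y, u ≤ x → x < y → y ≤ v →
      |slope f x y - slope (brokenLinear b Dm Dp) x y| ≤ L * (v - u) := by
  obtain ⟨L₁, hL₁, h₁⟩ := hl.exists_abs_sub_sub_derivWithin_mul_le hb.1
  obtain ⟨L₂, hL₂, h₂⟩ := hr.exists_abs_sub_sub_derivWithin_mul_le hb.2
  have hDm' : derivWithin f (Icc A b) b = Dm := (hDm.mono Icc_subset_Iic_self).derivWithin
    (uniqueDiffOn_Icc hb.1 b (right_mem_Icc.2 hb.1.le))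
  have hDp' : derivWithin f (Icc b B) b = Dp := (hDp.mono Icc_subset_Ici_self).derivWithin
    (uniqueDiffOn_Icc hb.2 b (left_mem_Icc.2 hb.2.le))
  refine ⟨max L₁ L₂, le_max_of_le_left hL₁, fun u v hu hub hbv hv x y hux hxy hyv => ?_⟩
  have hbump {L' w s t : ℝ} (hL' : L' ≤ max L₁ L₂) (hw : 0 ≤ w) (hwuv : w ≤ v - u)
      (hst : s ≤ t) : L' * w * (t - s) ≤ max L₁ L₂ * (v - u) * (t - s) := by
    have : 0 ≤ max L₁ L₂ := le_max_of_le_left hL₁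
    gcongr
  set h := f - brokenLinear b Dm Dp
  have hglued := abs_sub_le_mul_of_Icc_union_Icc (F := h) (K := max L₁ L₂ * (v - u))
    (a := u) (p := b) (b := v)
    (fun s hs t ht hst => by
      have hft := h₁ u b (Icc_subset_Icc_left hu) b ⟨hub, le_rfl⟩ s hs t ht hst
      rw [hDm'] at hft
      calc |h t - h s| = |f t - f s - Dm * (t - s)| := by
            simp only [h, Pi.sub_apply, brokenLinear_of_le hs.2, brokenLinear_of_le ht.2]
            ring_nf
        _ ≤ _ := hft.trans (hbump (le_max_left _ _) (sub_nonneg.2 hub) (by linarith) hst))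
    (fun s hs t ht hst => by
      have hft := h₂ b v (Icc_subset_Icc_right hv) b ⟨le_rfl, hbv⟩ s hs t ht hst
      rw [hDp'] at hft
      calc |h t - h s| = |f t - f s - Dp * (t - s)| := by
            simp only [h, Pi.sub_apply, brokenLinear_of_ge hs.1, brokenLinear_of_ge ht.1]
            ring_nf
        _ ≤ _ := hft.trans (hbump (le_max_right _ _) (sub_nonneg.2 hbv) (by linarith) hst))
    x ⟨hux, hxy.le.trans hyv⟩ y ⟨hux.trans hxy.le, hyv⟩ hxy.le
  have hyx : 0 < y - x := sub_pos.2 hxy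
  rw [slope_def_field, slope_def_field, ← sub_div, abs_div, abs_of_pos hyx, div_le_iff₀ hyx]
  calc _ = |h y - h x| := by simp only [h, Pi.sub_apply]; ring_nf
    _ ≤ _ := hglued

theorem exists_slope_bounds_of_break_point {f : ℝ → ℝ} {A B b c Dm Dp : ℝ} (hb : b ∈ Ioo A B)
    (hc : 0 < c) (hcont : ContinuousOn f (Icc A B)) (hl : ContDiffOn ℝ 2 f (Icc A b))
    (hr : ContDiffOn ℝ 2 f (Icc b B)) (hDm : HasDerivWithinAt f Dm (Iic b) b)
    (hDp : HasDerivWithinAt f Dp (Ici b) b) (hDmpos : 0 < Dm) (hDppos : 0 < Dp)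
    (hderiv : ∀ x ∈ Icc A B, x ≠ b → c ≤ deriv f x) :
    ∃ m M L : ℝ, 0 < m ∧ m ≤ M ∧ 0 ≤ L ∧
      ∀ u v, A ≤ u → u ≤ b → b ≤ v → v ≤ B → ∀ x y, u ≤ x → x < y → y ≤ v →
        slope f x y ∈ Icc m M ∧ slope (brokenLinear b Dm Dp) x y ∈ Icc m M ∧
          |slope f x y - slope (brokenLinear b Dm Dp) x y| ≤ L * (v - u) := by
  obtain ⟨L, hL, herr⟩ := exists_abs_slope_sub_slope_brokenLinear_le hb hl hr hDm hDp
  have hlow := le_slope_of_le_deriv_of_ne hc (Ioo_subset_Icc_self hb) hcont hderiv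
  have hmaxM : max Dm Dp ≤ max Dm Dp + L * (B - A) :=
    le_add_of_nonneg_right (mul_nonneg hL (by linarith [hb.1, hb.2]))
  refine ⟨min c (min Dm Dp), max Dm Dp + L * (B - A), L, lt_min hc (lt_min hDmpos hDppos),
    (min_le_right _ _).trans (min_le_max.trans hmaxM), hL,
    fun u v hu hub hbv hv x y hux hxy hyv => ?_⟩
  have hg := slope_brokenLinear_mem_Icc (b := b) (σm := Dm) (σp := Dp) hxy
  have hfg := herr u v hu hub hbv hv x y hux hxy hyv
  have hLB : L * (v - u) ≤ L * (B - A) := by gcongr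
  refine ⟨⟨(min_le_left _ _).trans (hlow x ⟨?_, ?_⟩ y ⟨?_, ?_⟩ hxy), ?_⟩,
    ⟨(min_le_right _ _).trans hg.1, hg.2.trans hmaxM⟩, hfg⟩ <;>
    linarith [(abs_le.1 hfg).2, hg.2]

theorem distortion_at_break_point_general (A B : ℝ)
    (f : ℝ → ℝ) (bp : ℝ) (hbp : bp ∈ Set.Ioo A B) (c : ℝ) (hc : 0 < c)
    (hcont : ContinuousOn f (Set.Icc A B))
    (hC2l : ContDiffOn ℝ 2 f (Set.Icc A bp))
    (hC2r : ContDiffOn ℝ 2 f (Set.Icc bp B))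
    (Dm Dp : ℝ) (hDm : HasDerivWithinAt f Dm (Set.Iic bp) bp)
    (hDp : HasDerivWithinAt f Dp (Set.Ici bp) bp)
    (hDmpos : 0 < Dm) (hDppos : 0 < Dp)
    (hderiv : ∀ x ∈ Set.Icc A B, x ≠ bp → c ≤ deriv f x) :
    ∃ C2 > 0, ∀ z1 z2 z3 z4 : ℝ,
      A ≤ z1 → z1 < bp → bp < z2 → z2 < z3 → z3 < z4 → z4 ≤ B →
      |Distortion z1 z2 z3 z4 f -
        ((Dm / Dp + (1 - Dm / Dp) * ((z2 - bp) / (z2 - z1))) *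
            (1 + (z3 - z2) / (z2 - z1))) /
          (Dm / Dp + (1 - Dm / Dp) * ((z2 - bp) / (z2 - z1)) +
            (z3 - z2) / (z2 - z1))| ≤ C2 * (z4 - z1) := by
  obtain ⟨m, M, L, hm, hmM, hL, hslope⟩ :=
    exists_slope_bounds_of_break_point hbp hc hcont hC2l hC2r hDm hDp hDmpos hDppos hderiv
  have hM : 0 < M := hm.trans_le hmM
  refine ⟨4 * M ^ 3 / m ^ 4 * L + 1, by positivity, ?_⟩
  intro z1 z2 z3 z4 hAz1 h1b hb2 h23 h34 hz4B
  have h := hslope z1 z4 hAz1 h1b.le (by linarith) hz4B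
  obtain ⟨f12, g12, e12⟩ := h z1 z2 le_rfl (h1b.trans hb2) (by linarith)
  obtain ⟨f34, g34, e34⟩ := h z3 z4 (by linarith) h34 le_rfl
  obtain ⟨f13, g13, e13⟩ := h z1 z3 le_rfl (by linarith) (by linarith)
  obtain ⟨f24, g24, e24⟩ := h z2 z4 (by linarith) (by linarith) le_rfl
  rw [← distortion_brokenLinear hDmpos.le hDppos ⟨h1b.le, hb2.le⟩ (h1b.trans hb2) h23 h34,
    distortion_eq_slope, distortion_eq_slope]
  calc _ ≤ 4 * M ^ 3 / m ^ 4 * (L * (z4 - z1)) :=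
        abs_mul_div_mul_sub_mul_div_mul_le hm f12 f34 f13 f24 g12 g34 g13 g24 e12 e34 e13 e24
    _ ≤ (4 * M ^ 3 / m ^ 4 * L + 1) * (z4 - z1) := by nlinarith

/-- Lemma 2.9 (Dzhalilov–Khanin): cross-ratio distortion at a break point `b`
with jump ratio `σ = Df₋(b)/Df₊(b)`. -/
theorem distortion_at_break_point (A B : ℝ) (hAB : A < B)
    (f : ℝ → ℝ) (bp : ℝ) (hbp : bp ∈ Set.Ioo A B) (c : ℝ) (hc : 0 < c)
    (hmono : StrictMonoOn f (Set.Icc A B))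
    (hcont : ContinuousOn f (Set.Icc A B))
    (hC2l : ContDiffOn ℝ 2 f (Set.Icc A bp))
    (hC2r : ContDiffOn ℝ 2 f (Set.Icc bp B))
    (Dm Dp : ℝ) (hDm : HasDerivWithinAt f Dm (Set.Iic bp) bp)
    (hDp : HasDerivWithinAt f Dp (Set.Ici bp) bp)
    (hDmpos : 0 < Dm) (hDppos : 0 < Dp)
    (hderiv : ∀ x ∈ Set.Icc A B, x ≠ bp → c ≤ deriv f x) :
    ∃ C2 > 0, ∀ z1 z2 z3 z4 : ℝ,
      A ≤ z1 → z1 < bp → bp < z2 → z2 < z3 → z3 < z4 → z4 ≤ B →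
      |Distortion z1 z2 z3 z4 f -
        ((Dm / Dp + (1 - Dm / Dp) * ((z2 - bp) / (z2 - z1))) *
            (1 + (z3 - z2) / (z2 - z1))) /
          (Dm / Dp + (1 - Dm / Dp) * ((z2 - bp) / (z2 - z1)) +
            (z3 - z2) / (z2 - z1))| ≤ C2 * (z4 - z1) :=
  distortion_at_break_point_general A B f bp hbp c hc hcont hC2l hC2r Dm Dp hDm hDp hDmpos hDppos
    hderiv
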